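/- The Nédélec space ND_q := [P_q]³ + x × [P_q]³ on ℝ³ is a direct sum of [P_q]³ and the space of maps x ↦ x × p(x) where p ranges over homogeneous vector polynomials of degree q; that is, ND_q = [P_q]³ ⊕ {x × p(x) : p homogeneous of degree q}. -/

import Mathlib

/-!
Write `w ∈ [P_q]³` as `h + r` with `h` its homogeneous component of degree `q`; then
`x × r(x)` has degree `≤ q`, so `x × w(x) ∈ [P_q]³ + x × h(x)`, which gives the decomposition.
For the intersection: if `x × p(x)` with `p` homogeneous of degree `q` is a polynomial map of
degree `≤ q`, its components are polynomials that are homogeneous of degree `q + 1` (polynomials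
over `ℝ` are determined by their values), hence zero.
-/

open Matrix

/-- `v` is a vector-valued polynomial map with each component of total degree at most `q`. -/
def IsPolyMapDeg (q : ℕ) (v : (Fin 3 → ℝ) → Fin 3 → ℝ) : Prop :=
  ∃ p : Fin 3 → MvPolynomial (Fin 3) ℝ,
    (∀ i, (p i).totalDegree ≤ q) ∧ ∀ x i, v x i = MvPolynomial.eval x (p i)

/-- `v` is a vector-valued polynomial map with each component homogeneous of degree `d`. -/
def IsHomogPolyMap (d : ℕ) (v : (Fin 3 → ℝ) → Fin 3 → ℝ) : Prop :=
  ∃ p : Fin 3 → MvPolynomial (Fin 3) ℝ,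
    (∀ i, (p i).IsHomogeneous d) ∧ ∀ x i, v x i = MvPolynomial.eval x (p i)

/-- Membership in the Nédélec space `ND_q = [P_q]³ + x × [P_q]³`. -/
def MemNedelec (q : ℕ) (v : (Fin 3 → ℝ) → Fin 3 → ℝ) : Prop :=
  ∃ v₁ v₂, IsPolyMapDeg q v₁ ∧ IsPolyMapDeg q v₂ ∧ ∀ x, v x = v₁ x + x ⨯₃ (v₂ x)

/-- `v` is of the form `x ↦ x × p(x)` with `p` a homogeneous vector polynomial of degree `q`. -/
def MemCrossHomog (q : ℕ) (v : (Fin 3 → ℝ) → Fin 3 → ℝ) : Prop :=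
  ∃ p, IsHomogPolyMap q p ∧ ∀ x, v x = x ⨯₃ (p x)

open MvPolynomial

theorem RingHom.comp_cross {R S : Type*} [CommRing R] [CommRing S] (f : R →+* S)
    (u v : Fin 3 → R) : f ∘ (u ⨯₃ v) = (f ∘ u) ⨯₃ (f ∘ v) := by
  ext i; fin_cases i <;> simp [cross_apply]

namespace MvPolynomial

variable {σ R : Type*} [CommRing R]

theorem totalDegree_X_mul_sub_homogeneousComponent_le {p : MvPolynomial σ R} {n : ℕ}
    (hp : p.totalDegree ≤ n) (i : σ) :
    (X i * (p - homogeneousComponent n p)).totalDegree ≤ n := by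
  classical
  refine Finset.sup_le fun m' hm' => ?_
  rw [support_X_mul, Finset.mem_map] at hm'
  obtain ⟨m, hm, rfl⟩ := hm'
  rw [mem_support_iff, coeff_sub, coeff_homogeneousComponent] at hm
  have hlt : m.degree < n := by
    by_cases hmn : m.degree = n
    · simp [hmn] at hm
    · rw [if_neg hmn, sub_zero] at hm
      exact lt_of_le_of_ne ((le_totalDegree (mem_support_iff.mpr hm)).trans hp) hmn
  change (Finsupp.single i 1 + m).degree ≤ n
  rw [map_add, Finsupp.degree_single]
  omega

theorem isHomogeneous_X_cross {p : Fin 3 → MvPolynomial (Fin 3) R} {n : ℕ}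
    (hp : ∀ i, (p i).IsHomogeneous n) (i : Fin 3) : ((X ⨯₃ p) i).IsHomogeneous (n + 1) := by
  have hX (j : Fin 3) : (X j : MvPolynomial (Fin 3) R).IsHomogeneous 1 := isHomogeneous_X _ _
  rw [add_comm]
  fin_cases i <;> exact ((hX _).mul (hp _)).sub ((hX _).mul (hp _))

theorem totalDegree_X_cross_le {p : Fin 3 → MvPolynomial (Fin 3) R} {n : ℕ}
    (hp : ∀ i j, (X i * p j).totalDegree ≤ n) (i : Fin 3) : ((X ⨯₃ p) i).totalDegree ≤ n := by
  fin_cases i <;> exact (totalDegree_sub _ _).trans (max_le (hp _ _) (hp _ _))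

theorem eval_comp_X_cross (x : Fin 3 → R) (p : Fin 3 → MvPolynomial (Fin 3) R) :
    eval x ∘ (X ⨯₃ p) = x ⨯₃ (eval x ∘ p) := by
  rw [RingHom.comp_cross, show eval x ∘ X = x by ext; simp]

end MvPolynomial

theorem IsPolyMapDeg.add {q : ℕ} {v w : (Fin 3 → ℝ) → Fin 3 → ℝ} (hv : IsPolyMapDeg q v)
    (hw : IsPolyMapDeg q w) : IsPolyMapDeg q (v + w) := by
  obtain ⟨p, hpq, hp⟩ := hv
  obtain ⟨r, hrq, hr⟩ := hw
  exact ⟨p + r, fun i => (totalDegree_add _ _).trans (max_le (hpq i) (hrq i)),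
    fun x i => by simp [hp, hr]⟩

theorem IsHomogPolyMap.isPolyMapDeg {q : ℕ} {v : (Fin 3 → ℝ) → Fin 3 → ℝ}
    (hv : IsHomogPolyMap q v) : IsPolyMapDeg q v :=
  let ⟨p, hpq, hp⟩ := hv
  ⟨p, fun i => (hpq i).totalDegree_le, hp⟩

theorem IsPolyMapDeg.exists_cross_eq_add {q : ℕ} {w : (Fin 3 → ℝ) → Fin 3 → ℝ}
    (hw : IsPolyMapDeg q w) : ∃ w₁ w₂, IsPolyMapDeg q w₁ ∧ MemCrossHomog q w₂ ∧
      ∀ x, x ⨯₃ w x = w₁ x + w₂ x := by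
  obtain ⟨p, hpq, hp⟩ := hw
  set h := fun i => homogeneousComponent q (p i)
  set r := p - h
  refine ⟨fun x => eval x ∘ (X ⨯₃ r), fun x => x ⨯₃ (eval x ∘ h),
    ⟨X ⨯₃ r, totalDegree_X_cross_le fun i j =>
      totalDegree_X_mul_sub_homogeneousComponent_le (hpq j) i, fun _ _ => rfl⟩,
    ⟨_, ⟨h, fun i => homogeneousComponent_isHomogeneous q (p i), fun _ _ => rfl⟩, fun _ => rfl⟩,
    fun x => ?_⟩
  have hwx : w x = eval x ∘ r + eval x ∘ h := by
    ext i; simp [hp, r]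
  rw [hwx, map_add, ← eval_comp_X_cross]

theorem MemNedelec.exists_eq_add {q : ℕ} {v : (Fin 3 → ℝ) → Fin 3 → ℝ} (hv : MemNedelec q v) :
    ∃ v₁ v₂, IsPolyMapDeg q v₁ ∧ MemCrossHomog q v₂ ∧ ∀ x, v x = v₁ x + v₂ x := by
  obtain ⟨v₁, w, hv₁, hw, hv⟩ := hv
  obtain ⟨w₁, w₂, hw₁, hw₂, hw⟩ := hw.exists_cross_eq_add
  exact ⟨v₁ + w₁, w₂, hv₁.add hw₁, hw₂, fun x => by rw [hv, hw, Pi.add_apply, add_assoc]⟩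

theorem memNedelec_of_eq_add {q : ℕ} {v v₁ v₂ : (Fin 3 → ℝ) → Fin 3 → ℝ}
    (hv₁ : IsPolyMapDeg q v₁) (hv₂ : MemCrossHomog q v₂) (hv : ∀ x, v x = v₁ x + v₂ x) :
    MemNedelec q v := by
  obtain ⟨p, hp, hv₂⟩ := hv₂
  exact ⟨v₁, p, hv₁, hp.isPolyMapDeg, fun x => by rw [hv, hv₂]⟩

theorem eq_zero_of_isPolyMapDeg_of_memCrossHomog {q : ℕ} {v : (Fin 3 → ℝ) → Fin 3 → ℝ}
    (hv : IsPolyMapDeg q v) (hv' : MemCrossHomog q v) : v = 0 := by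
  obtain ⟨a, haq, ha⟩ := hv
  obtain ⟨w, ⟨b, hb, hw⟩, hv'⟩ := hv'
  have hab : a = X ⨯₃ b := by
    ext i : 1
    refine MvPolynomial.funext fun x => ?_
    rw [← ha, hv', show w x = eval x ∘ b from funext (hw x), ← eval_comp_X_cross]
    rfl
  have ha0 (i : Fin 3) : a i = 0 := by
    by_contra hai
    have hdeg : (a i).totalDegree = q + 1 := (hab ▸ isHomogeneous_X_cross hb i).totalDegree hai
    have := haq i
    omega
  ext x i
  rw [ha, ha0]
  simp

/-- `ND_q = [P_q]³ ⊕ {x × p(x) : p homogeneous of degree q}`: every element of `ND_q`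
decomposes as a sum of the two pieces, and the two pieces intersect trivially. -/
theorem nedelec_directSum (q : ℕ) :
    (∀ v, MemNedelec q v ↔
        ∃ v₁ v₂, IsPolyMapDeg q v₁ ∧ MemCrossHomog q v₂ ∧ ∀ x, v x = v₁ x + v₂ x) ∧
    (∀ v, IsPolyMapDeg q v → MemCrossHomog q v → ∀ x, v x = 0) := by
  refine ⟨fun v => ⟨MemNedelec.exists_eq_add, ?_⟩, fun v hv hv' x => ?_⟩
  · rintro ⟨v₁, v₂, hv₁, hv₂, hv⟩
    exact memNedelec_of_eq_add hv₁ hv₂ hv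
  · rw [eq_zero_of_isPolyMapDeg_of_memCrossHomog hv hv', Pi.zero_apply]
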